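/- arXiv:1406.7733 — 3 statements merged into one kernel-verified Lean document; each statement's English description precedes it below -/
import Mathlib

section
/- Let A = F2[h^{±1}][p, v2, v3, v4, v5, ...] be a polynomial algebra over the Laurent ring F2[h^{±1}] on countably many variables p, v2, v3, v4, .... Let d be the unique F2[h^{±1}]-linear derivation with d(p) = 0, d(v2) = 0, and d(v_k) = h·v_{k-1}² for all k ≥ 3. Then d∘d = 0 and the cohomology ring ker(d)/im(d) is isomorphic as an F2[h^{±1}]-algebra to F2[h^{±1}][p, v2]/(v2²). -/
/-!
Over `F₂` the derivation kills squares. Call `n ≥ 2` active for a monomial when `X n` occurs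
to an odd power or `X (n - 1)` at least squared; the monomials without active index are those in
`p, v₂` that are at most linear in `v₂`. At the largest active index `N` the exponent of `X N` is
`0` or `1`, and trading `X (N - 1) ^ 2` for `h⁻¹ X N` and back matches the remaining monomials
along `d`. This matching is a contracting homotopy `s` with `d s + s d + π = id`, `π` the
projection onto the unmatched monomials, so every cycle is a polynomial in `p, v₂` plus a
boundary. Conversely a boundary has zero coefficient at every monomial in which all of
`X 1, X 2, …` occur at most once; since `v₂ ^ 2 = d (h⁻¹ v₃)`, the kernel of
`L[p, v₂] → ker d / im d` is exactly `(v₂ ^ 2)`.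
-/

open MvPolynomial

noncomputable section

/-- `L = F2[h^{±1}]`, the Laurent polynomial ring over `F2`. -/
def L : Type := LaurentPolynomial (ZMod 2)

instance : CommRing L := inferInstanceAs (CommRing (LaurentPolynomial (ZMod 2)))

/-- The invertible variable `h`. -/
def h : L := LaurentPolynomial.T 1

/-- `A = F2[h^{±1}][p, v₂, v₃, v₄, …]`, with `p = X 0` and `vₖ = X (k-1)` for `k ≥ 2`. -/
abbrev A : Type := MvPolynomial ℕ L

/-- The `F2[h^{±1}]`-linear derivation with `d p = 0`, `d v₂ = 0`,
`d vₖ = h·v_{k-1}²` for `k ≥ 3`. -/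
noncomputable def d : Derivation L A A :=
  MvPolynomial.mkDerivation L (fun n : ℕ => if n ≤ 1 then 0 else C h * (X (n - 1)) ^ 2)

/-- The kernel of `d`, as a subalgebra of `A`. -/
def kerd : Subalgebra L A where
  carrier := {a | d a = 0}
  mul_mem' := fun {a b} ha hb => by
    show d (a * b) = 0
    rw [Derivation.leibniz, ha, hb, smul_zero, smul_zero, add_zero]
  add_mem' := fun {a b} ha hb => by
    show d (a + b) = 0
    rw [map_add, ha, hb, add_zero]
  algebraMap_mem' := fun r => Derivation.map_algebraMap d r

instance : HasQuotient kerd (Ideal kerd) := Ideal.instHasQuotient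

/-- The image of `d`, as an ideal of `ker d`. -/
def imd : Ideal kerd := Ideal.span {y : kerd | ∃ a : A, d a = (y : A)}

instance : CommRing (kerd ⧸ imd) := Ideal.Quotient.commRing imd
instance : Algebra L (kerd ⧸ imd) := Ideal.Quotient.algebra L

/-- The target `F2[h^{±1}][p, v₂]/(v₂²)`, with `p = X 0` and `v₂ = X 1`. -/
abbrev T2 : Type :=
  MvPolynomial (Fin 2) L ⧸ Ideal.span {(X 1 : MvPolynomial (Fin 2) L) ^ 2}

instance : CharP L 2 :=
  (charP_of_injective_algebraMap' (ZMod 2) 2 : CharP (LaurentPolynomial (ZMod 2)) 2)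

def hInv : L := LaurentPolynomial.T (-1)

lemma h_mul_hInv : h * hInv = 1 :=
  (LaurentPolynomial.T_add (R := ZMod 2) 1 (-1)).symm.trans <| by
    rw [add_neg_cancel, LaurentPolynomial.T_zero]; rfl

section CharTwo

variable {R B : Type*} [CommRing R] [CommRing B] [Algebra R B] [CharP B 2]

lemma Derivation.map_sq_eq_zero_of_charTwo (D : Derivation R B B) (a : B) : D (a ^ 2) = 0 := by
  rw [D.leibniz_pow, CharTwo.two_nsmul]

lemma Derivation.apply_apply_mul_of_charTwo (D : Derivation R B B) (a b : B) :
    D (D (a * b)) = a * D (D b) + b * D (D a) := by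
  simp only [D.leibniz, smul_eq_mul, map_add]
  linear_combination D a * D b * CharTwo.two_eq_zero (R := B)

end CharTwo

lemma d_X_of_le_one {n : ℕ} (hn : n ≤ 1) : d (X n) = 0 := by
  rw [d, mkDerivation_X, if_pos hn]

lemma d_X_of_two_le {n : ℕ} (hn : 2 ≤ n) : d (X n) = C h * X (n - 1) ^ 2 := by
  rw [d, mkDerivation_X, if_neg (by omega)]

lemma d_C (r : L) : d (C r) = 0 :=
  d.map_algebraMap r

lemma d_d_X (n : ℕ) : d (d (X n)) = 0 := by
  rcases Nat.lt_or_ge n 2 with hn | hn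
  · rw [d_X_of_le_one (by omega), map_zero]
  · rw [d_X_of_two_le hn, Derivation.leibniz, d_C, d.map_sq_eq_zero_of_charTwo, smul_zero,
      smul_zero, add_zero]

lemma d_d (a : A) : d (d a) = 0 := by
  induction a using MvPolynomial.induction_on with
  | C r => rw [d_C, map_zero]
  | add p q hp hq => rw [map_add, map_add, hp, hq, add_zero]
  | mul_X p n hp => rw [d.apply_apply_mul_of_charTwo, hp, d_d_X, mul_zero, mul_zero, add_zero]

lemma eq_d_of_map_X (D : Derivation L A A) (h0 : D (X 0) = 0) (h1 : D (X 1) = 0)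
    (hk : ∀ k : ℕ, 3 ≤ k → D (X (k - 1)) = C h * X (k - 2) ^ 2) : D = d := by
  refine MvPolynomial.derivation_ext fun i => ?_
  match i with
  | 0 => rw [h0, d_X_of_le_one zero_le_one]
  | 1 => rw [h1, d_X_of_le_one le_rfl]
  | n + 2 => exact (hk (n + 3) (by omega)).trans (d_X_of_two_le (n := n + 2) (by omega)).symm

namespace Exponent

variable {σ : ℕ →₀ ℕ} {i j m n : ℕ}

def IsActive (σ : ℕ →₀ ℕ) (n : ℕ) : Prop := 2 ≤ n ∧ (σ n % 2 = 1 ∨ 2 ≤ σ (n - 1))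

instance (σ : ℕ →₀ ℕ) : DecidablePred (IsActive σ) :=
  fun _ => inferInstanceAs (Decidable (_ ∧ _))

-- The largest active index, or `0` when there is none.
def pivot (σ : ℕ →₀ ℕ) : ℕ := Nat.findGreatest (IsActive σ) (σ.support.sup id + 1)

def IsHarmonic (σ : ℕ →₀ ℕ) : Prop := σ 1 ≤ 1 ∧ ∀ m, 2 ≤ m → σ m = 0

def lower (i : ℕ) (σ : ℕ →₀ ℕ) : ℕ →₀ ℕ := σ - Finsupp.single i 1 + Finsupp.single (i - 1) 2

def raise (n : ℕ) (σ : ℕ →₀ ℕ) : ℕ →₀ ℕ := σ + Finsupp.single n 1 - Finsupp.single (n - 1) 2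

lemma lower_apply :
    lower i σ m = σ m - (if i = m then 1 else 0) + (if i - 1 = m then 2 else 0) := by
  simp [lower, Finsupp.single_apply]

lemma raise_apply :
    raise n σ m = σ m + (if n = m then 1 else 0) - (if n - 1 = m then 2 else 0) := by
  simp [raise, Finsupp.single_apply]

lemma IsActive.le_pivot (h : IsActive σ n) : n ≤ pivot σ := by
  refine Nat.le_findGreatest ?_ h
  have hle : ∀ k, σ k ≠ 0 → k ≤ σ.support.sup id := fun k hk =>
    Finset.le_sup (f := id) (Finsupp.mem_support_iff.2 hk)
  rcases h with ⟨_, h | h⟩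
  · linarith [hle n (by omega)]
  · linarith [hle (n - 1) (by omega), Nat.sub_le n 1, Nat.sub_add_cancel (by omega : 1 ≤ n)]

lemma isActive_pivot (h : 2 ≤ pivot σ) : IsActive σ (pivot σ) :=
  Nat.findGreatest_of_ne_zero rfl (by omega)

lemma not_isActive_of_pivot_lt (hm : pivot σ < m) : ¬ IsActive σ m :=
  fun h => absurd h.le_pivot (by omega)

lemma pivot_eq (hN : IsActive σ n) (hmax : ∀ m, n < m → ¬ IsActive σ m) : pivot σ = n :=
  le_antisymm (not_lt.1 fun hlt => hmax _ hlt (isActive_pivot (by linarith [hN.1, hN.le_pivot])))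
    hN.le_pivot

lemma apply_le_one_of_pivot_le (hj : 1 ≤ j) (hpj : pivot σ ≤ j) : σ j ≤ 1 := by
  have := not_isActive_of_pivot_lt (σ := σ) (m := j + 1) (by omega)
  simp only [IsActive, Nat.add_sub_cancel] at this
  omega

lemma apply_eq_zero_of_pivot_lt (hm : 2 ≤ m) (hpm : pivot σ < m) : σ m = 0 := by
  have := not_isActive_of_pivot_lt hpm
  have := apply_le_one_of_pivot_le (σ := σ) (by omega : 1 ≤ m) hpm.le
  simp only [IsActive] at *
  omega

lemma isHarmonic_iff_pivot_lt_two : IsHarmonic σ ↔ pivot σ < 2 := by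
  constructor
  · rintro ⟨h1, h⟩
    by_contra! hp
    obtain ⟨-, hodd | h2⟩ := isActive_pivot hp
    · rw [h _ hp] at hodd; omega
    · rcases Nat.lt_or_ge (pivot σ - 1) 2 with hlt | hge
      · rw [show pivot σ - 1 = 1 by omega] at h2; omega
      · rw [h _ hge] at h2; omega
  · intro hp
    exact ⟨apply_le_one_of_pivot_le le_rfl (by omega),
      fun m hm => apply_eq_zero_of_pivot_lt hm (by omega)⟩

def oddSupport (σ : ℕ →₀ ℕ) : Finset ℕ := σ.support.filter fun i => 2 ≤ i ∧ σ i % 2 = 1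

lemma mem_oddSupport : i ∈ oddSupport σ ↔ 2 ≤ i ∧ σ i % 2 = 1 := by
  rw [oddSupport, Finset.mem_filter, Finsupp.mem_support_iff]
  omega

lemma IsActive.of_mem_oddSupport (hi : i ∈ oddSupport σ) : IsActive σ i :=
  ⟨(mem_oddSupport.1 hi).1, Or.inl (mem_oddSupport.1 hi).2⟩

lemma pivot_lower (hi : i ∈ oddSupport σ) : pivot (lower i σ) = pivot σ := by
  obtain ⟨hi2, hodd⟩ := mem_oddSupport.1 hi
  have hiN := (IsActive.of_mem_oddSupport hi).le_pivot
  have hN := isActive_pivot (by omega : 2 ≤ pivot σ)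
  refine pivot_eq ⟨hN.1, ?_⟩ fun m hm hact => ?_
  · have := apply_le_one_of_pivot_le (σ := σ) (by omega) le_rfl
    simp only [lower_apply, IsActive] at hN ⊢
    split_ifs <;> subst_vars <;> omega
  · have h1 := apply_eq_zero_of_pivot_lt (σ := σ) (by omega) hm
    have h2 := apply_le_one_of_pivot_le (σ := σ) (j := m - 1) (by omega) (by omega)
    simp only [lower_apply, IsActive] at hact
    split_ifs at hact <;> subst_vars <;> omega

lemma raise_lower_self (h : 1 ≤ σ n) : raise n (lower n σ) = σ := by
  ext m
  simp only [raise_apply, lower_apply]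
  split_ifs <;> subst_vars <;> omega

lemma lower_raise_self (hn : 1 ≤ n) (h : 2 ≤ σ (n - 1)) : lower n (raise n σ) = σ := by
  ext m
  simp only [raise_apply, lower_apply]
  split_ifs <;> subst_vars <;> omega

lemma raise_lower_comm (hi2 : 2 ≤ i) (hi : 1 ≤ σ i) (hin : i < n) (h : 2 ≤ lower i σ (n - 1)) :
    raise n (lower i σ) = lower i (raise n σ) := by
  ext m
  rw [lower_apply] at h
  simp only [raise_apply, lower_apply]
  split_ifs at h ⊢ <;> subst_vars <;> omega

lemma oddSupport_raise (hn : 2 ≤ n) (h0 : σ n = 0) (h2 : 2 ≤ σ (n - 1)) :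
    oddSupport (raise n σ) = insert n (oddSupport σ) := by
  ext i
  rw [Finset.mem_insert, mem_oddSupport, mem_oddSupport, raise_apply]
  split_ifs <;> subst_vars <;> omega

end Exponent

open Exponent

lemma d_monomial (σ : ℕ →₀ ℕ) (r : L) :
    d (monomial σ r) = ∑ i ∈ oddSupport σ, monomial (lower i σ) (h * r) := by
  rw [d, mkDerivation_monomial, Finsupp.sum, oddSupport, Finset.sum_filter, Finset.smul_sum]
  refine Finset.sum_congr rfl fun i _ => ?_
  by_cases hi : 2 ≤ i
  · rw [if_neg (by omega), X_pow_eq_monomial, C_mul_monomial, smul_eq_mul, monomial_mul,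
      CharTwo.natCast_eq_ite, smul_monomial]
    by_cases hodd : σ i % 2 = 1
    · rw [if_neg (show ¬ Even (σ i) by rw [Nat.even_iff]; omega), if_pos ⟨hi, hodd⟩,
        smul_eq_mul, one_mul, mul_one, mul_comm]
      rfl
    · rw [if_pos (show Even (σ i) by rw [Nat.even_iff]; omega), if_neg (by omega), zero_mul,
        smul_zero, monomial_zero]
  · rw [if_pos (by omega), smul_zero, smul_zero, if_neg (by omega)]

def homotopyOnMonomial (σ : ℕ →₀ ℕ) : A :=
  if 2 ≤ pivot σ ∧ σ (pivot σ) = 0 then monomial (raise (pivot σ) σ) hInv else 0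

def homotopy : A →ₗ[L] A := (basisMonomials ℕ L).constr L homotopyOnMonomial

open scoped Classical in
def harmonicPart : A →ₗ[L] A :=
  (basisMonomials ℕ L).constr L fun σ => if IsHarmonic σ then monomial σ 1 else 0

lemma homotopy_monomial (σ : ℕ →₀ ℕ) (r : L) :
    homotopy (monomial σ r) = r • homotopyOnMonomial σ := by
  have h1 : homotopy (monomial σ 1) = homotopyOnMonomial σ := by
    simpa [homotopy] using (basisMonomials ℕ L).constr_basis L homotopyOnMonomial σ
  rw [← h1, ← map_smul, smul_monomial, smul_eq_mul, mul_one]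

open scoped Classical in
lemma harmonicPart_monomial_one (σ : ℕ →₀ ℕ) :
    harmonicPart (monomial σ 1) = if IsHarmonic σ then monomial σ 1 else 0 := by
  simpa [harmonicPart] using (basisMonomials ℕ L).constr_basis L _ σ

lemma homotopyOnMonomial_lower {σ : ℕ →₀ ℕ} {i : ℕ} (hi : i ∈ oddSupport σ) (hne : i ≠ pivot σ) :
    homotopyOnMonomial (lower i σ) =
      if σ (pivot σ) = 0 then monomial (raise (pivot σ) (lower i σ)) hInv else 0 := by
  have hiN := (IsActive.of_mem_oddSupport hi).le_pivot
  have hi2 := (mem_oddSupport.1 hi).1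
  have hN : lower i σ (pivot σ) = σ (pivot σ) := by
    rw [lower_apply]
    split_ifs <;> omega
  rw [homotopyOnMonomial, pivot_lower hi, hN]
  exact if_congr ⟨And.right, fun h0 => ⟨by omega, h0⟩⟩ rfl rfl

lemma homotopy_d_monomial_of_apply_pivot_eq_one {σ : ℕ →₀ ℕ} (h2 : 2 ≤ pivot σ)
    (h1 : σ (pivot σ) = 1) :
    homotopy (d (monomial σ 1)) = monomial σ 1 := by
  have hmem : pivot σ ∈ oddSupport σ := mem_oddSupport.2 ⟨h2, by omega⟩
  rw [d_monomial, map_sum, Finset.sum_eq_single_of_mem _ hmem fun i hi hne => by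
    rw [homotopy_monomial, homotopyOnMonomial_lower hi hne, if_neg (by omega), smul_zero]]
  have hlower : lower (pivot σ) σ (pivot σ) = 0 := by
    rw [lower_apply]
    split_ifs <;> omega
  rw [homotopy_monomial, homotopyOnMonomial, pivot_lower hmem, if_pos ⟨h2, hlower⟩,
    raise_lower_self (by omega), smul_monomial, smul_eq_mul, mul_one, h_mul_hInv]

lemma d_homotopy_add_homotopy_d_of_apply_pivot_eq_zero {σ : ℕ →₀ ℕ} (h2 : 2 ≤ pivot σ)
    (h0 : σ (pivot σ) = 0) :
    d (homotopyOnMonomial σ) + homotopy (d (monomial σ 1)) = monomial σ 1 := by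
  have hN1 : 2 ≤ σ (pivot σ - 1) := (isActive_pivot h2).2.resolve_left (by omega)
  have hterm : ∀ i ∈ oddSupport σ,
      homotopy (monomial (lower i σ) (h * 1)) = monomial (lower i (raise (pivot σ) σ)) 1 := by
    intro i hi
    obtain ⟨hi2, hodd⟩ := mem_oddSupport.1 hi
    have hiN : i < pivot σ := lt_of_le_of_ne (IsActive.of_mem_oddSupport hi).le_pivot
      (by rintro rfl; omega)
    have hlower : 2 ≤ lower i σ (pivot σ - 1) := by
      rw [lower_apply]
      split_ifs <;> subst_vars <;> omega
    rw [homotopy_monomial, homotopyOnMonomial_lower hi hiN.ne, if_pos h0,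
      raise_lower_comm hi2 (by omega) hiN hlower, smul_monomial, smul_eq_mul, mul_one, h_mul_hInv]
  rw [homotopyOnMonomial, if_pos ⟨h2, h0⟩, d_monomial, oddSupport_raise h2 h0 hN1,
    Finset.sum_insert (by rw [mem_oddSupport]; omega), lower_raise_self (by omega) hN1,
    h_mul_hInv, d_monomial, map_sum, Finset.sum_congr rfl hterm, add_assoc,
    CharTwo.add_self_eq_zero, add_zero]

lemma d_homotopy_add_homotopy_d_add_harmonicPart_monomial (σ : ℕ →₀ ℕ) :
    d (homotopyOnMonomial σ) + homotopy (d (monomial σ 1)) + harmonicPart (monomial σ 1) =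
      monomial σ 1 := by
  rw [harmonicPart_monomial_one]
  by_cases hσ : IsHarmonic σ
  · have hp := isHarmonic_iff_pivot_lt_two.1 hσ
    have hodd : oddSupport σ = ∅ := Finset.eq_empty_of_forall_notMem fun i hi => by
      linarith [(IsActive.of_mem_oddSupport hi).le_pivot, (mem_oddSupport.1 hi).1]
    rw [homotopyOnMonomial, if_neg (by omega), d_monomial, hodd, Finset.sum_empty, map_zero,
      map_zero, if_pos hσ, zero_add, zero_add]
  · have h2 : 2 ≤ pivot σ := not_lt.1 (mt isHarmonic_iff_pivot_lt_two.2 hσ)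
    rw [if_neg hσ, add_zero]
    rcases Nat.le_one_iff_eq_zero_or_eq_one.1
        (apply_le_one_of_pivot_le (j := pivot σ) (by omega) le_rfl) with h0 | h1
    · exact d_homotopy_add_homotopy_d_of_apply_pivot_eq_zero h2 h0
    · rw [homotopyOnMonomial, if_neg (by omega), map_zero, zero_add]
      exact homotopy_d_monomial_of_apply_pivot_eq_one h2 h1

lemma d_homotopy_add_homotopy_d_add_harmonicPart (z : A) :
    d (homotopy z) + homotopy (d z) + harmonicPart z = z := by
  have hext : (d : A →ₗ[L] A) ∘ₗ homotopy + homotopy ∘ₗ (d : A →ₗ[L] A) + harmonicPart =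
      LinearMap.id := (basisMonomials ℕ L).ext fun σ => by
    simp only [LinearMap.add_apply, LinearMap.comp_apply, LinearMap.id_apply, coe_basisMonomials,
      Derivation.coeFn_coe, homotopy_monomial, one_smul]
    exact d_homotopy_add_homotopy_d_add_harmonicPart_monomial σ
  exact LinearMap.congr_fun hext z

def inclPV : MvPolynomial (Fin 2) L →ₐ[L] A := rename Fin.val

lemma monomial_mem_range_inclPV {σ : ℕ →₀ ℕ} (hσ : IsHarmonic σ) :
    monomial σ (1 : L) ∈ inclPV.range := by
  refine exists_rename_eq_of_vars_subset_range _ Fin.val Fin.val_injective fun n hn => ?_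
  obtain ⟨τ, hτ, hn⟩ := (mem_vars_iff_mem_support n).1 hn
  rw [Finset.mem_singleton.1 (support_monomial_subset hτ), Finsupp.mem_support_iff] at hn
  exact ⟨⟨n, by by_contra hn2; exact hn (hσ.2 n (by omega))⟩, rfl⟩

lemma harmonicPart_mem_range (z : A) : harmonicPart z ∈ inclPV.range := by
  suffices LinearMap.range harmonicPart ≤ Subalgebra.toSubmodule inclPV.range from
    this ⟨z, rfl⟩
  rw [harmonicPart, Module.Basis.constr_range, Submodule.span_le]
  rintro _ ⟨σ, rfl⟩
  dsimp only
  split_ifs with hσ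
  · exact monomial_mem_range_inclPV hσ
  · exact zero_mem _

lemma exists_eq_inclPV_add_d {z : A} (hz : d z = 0) : ∃ u c, z = inclPV u + d c := by
  obtain ⟨u, hu⟩ := (inclPV.mem_range).1 (harmonicPart_mem_range z)
  have hzero := d_homotopy_add_homotopy_d_add_harmonicPart z
  rw [hz, map_zero, add_zero] at hzero
  exact ⟨u, homotopy z, by rw [hu, add_comm, hzero]⟩

lemma coeff_d_eq_zero {σ : ℕ →₀ ℕ} (hσ : ∀ m, 1 ≤ m → σ m ≤ 1) (c : A) : coeff σ (d c) = 0 := by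
  rw [c.as_sum, map_sum, coeff_sum]
  refine Finset.sum_eq_zero fun τ _ => ?_
  rw [d_monomial, coeff_sum]
  refine Finset.sum_eq_zero fun i hi => ?_
  rw [coeff_monomial, if_neg]
  rintro rfl
  have := hσ (i - 1) (by have := (mem_oddSupport.1 hi).1; omega)
  rw [lower_apply] at this
  split_ifs at this <;> omega

lemma mem_span_X_one_sq_of_inclPV_eq_d {f : MvPolynomial (Fin 2) L} {c : A}
    (hf : inclPV f = d c) : f ∈ Ideal.span {(X 1 : MvPolynomial (Fin 2) L) ^ 2} := by
  rw [X_pow_eq_monomial, ← Set.image_singleton (f := fun s => monomial s (1 : L)),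
    mem_ideal_span_monomial_image]
  refine fun τ hτ => ⟨_, rfl, Finsupp.single_le_iff.2 (not_lt.1 fun hlt => ?_)⟩
  refine mem_support_iff.1 hτ ?_
  rw [← coeff_rename_mapDomain Fin.val Fin.val_injective]
  refine (congrArg (coeff _) hf).trans (coeff_d_eq_zero (fun m hm => ?_) c)
  obtain rfl | hm2 : m = 1 ∨ 2 ≤ m := by omega
  · exact (Finsupp.mapDomain_apply Fin.val_injective τ 1).trans_le (by omega)
  · rw [Finsupp.mapDomain_of_notMem_range _ _ (by rintro ⟨j, rfl⟩; exact absurd j.isLt (by omega))]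
    omega

lemma inclPV_mem_kerd (u : MvPolynomial (Fin 2) L) : inclPV u ∈ kerd := by
  classical
  refine derivation_eq_zero_of_forall_mem_vars fun i hi => ?_
  obtain ⟨j, -, rfl⟩ := Finset.mem_image.1 (vars_rename Fin.val u hi)
  exact d_X_of_le_one (by omega)

def cohomologyClass : MvPolynomial (Fin 2) L →ₐ[L] kerd ⧸ imd :=
  (Ideal.Quotient.mkₐ L imd).comp (inclPV.codRestrict kerd inclPV_mem_kerd)

lemma exists_d_eq_of_mem_imd {y : kerd} (hy : y ∈ imd) : ∃ a : A, d a = y := by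
  induction hy using Submodule.span_induction with
  | mem x hx => exact hx
  | zero => exact ⟨0, map_zero d⟩
  | add x y _ _ hx hy =>
    obtain ⟨a, ha⟩ := hx
    obtain ⟨b, hb⟩ := hy
    exact ⟨a + b, by rw [map_add, ha, hb]; rfl⟩
  | smul r x _ hx =>
    obtain ⟨a, ha⟩ := hx
    refine ⟨r * a, ?_⟩
    rw [Derivation.leibniz, show d (r : A) = 0 from r.2, smul_zero, add_zero, ha]
    rfl

lemma cohomologyClass_surjective : Function.Surjective cohomologyClass := by
  rintro ⟨z⟩
  obtain ⟨u, c, hzc⟩ := exists_eq_inclPV_add_d z.2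
  refine ⟨u, Ideal.Quotient.eq.2 (Ideal.subset_span ⟨-c, ?_⟩)⟩
  change d (-c) = inclPV u - z
  rw [hzc, map_neg]
  ring

lemma ker_cohomologyClass :
    RingHom.ker cohomologyClass = Ideal.span {(X 1 : MvPolynomial (Fin 2) L) ^ 2} := by
  refine le_antisymm (fun f hf => ?_) ((Ideal.span_singleton_le_iff_mem _).2 ?_)
  · obtain ⟨c, hc⟩ := exists_d_eq_of_mem_imd (Ideal.Quotient.eq_zero_iff_mem.1 hf)
    exact mem_span_X_one_sq_of_inclPV_eq_d hc.symm
  · refine Ideal.Quotient.eq_zero_iff_mem.2 (Ideal.subset_span ⟨C hInv * X 2, ?_⟩)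
    change _ = inclPV (X 1 ^ 2)
    rw [Derivation.leibniz, d_C, smul_zero, add_zero, d_X_of_two_le le_rfl, smul_eq_mul,
      ← mul_assoc, ← C_mul, mul_comm hInv, h_mul_hInv, C_1, one_mul, map_pow, inclPV, rename_X]
    rfl

def cohomologyEquiv : (kerd ⧸ imd) ≃ₐ[L] T2 :=
  (Ideal.quotientKerAlgEquivOfSurjective cohomologyClass_surjective).symm.trans
    (Ideal.quotientEquivAlgOfEq L ker_cohomologyClass)

/-- for the `F2[h^{±1}]`-linear derivation on
`F2[h^{±1}][p, v₂, v₃, …]` with `d p = d v₂ = 0` and `d vₖ = h·v_{k-1}²`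
(`k ≥ 3`), `d ∘ d = 0` and `ker d / im d ≅ F2[h^{±1}][p, v₂]/(v₂²)` as
`F2[h^{±1}]`-algebras. -/
theorem stmt2 :
    d (X 0) = 0 ∧ d (X 1) = 0 ∧
    (∀ k : ℕ, 3 ≤ k → d (X (k - 1)) = C h * (X (k - 2)) ^ 2) ∧
    (∀ D : Derivation L A A, D (X 0) = 0 → D (X 1) = 0 →
      (∀ k : ℕ, 3 ≤ k → D (X (k - 1)) = C h * (X (k - 2)) ^ 2) → D = d) ∧
    (∀ a : A, d (d a) = 0) ∧
    Nonempty ((kerd ⧸ imd) ≃ₐ[L] T2) := by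
  refine ⟨d_X_of_le_one zero_le_one, d_X_of_le_one le_rfl, fun k hk => ?_, eq_d_of_map_X, d_d,
    ⟨cohomologyEquiv⟩⟩
  rw [d_X_of_two_le (by omega), show k - 1 - 1 = k - 2 by omega]

end
end

section
/- Let E1^cl be the polynomial F2-algebra on generators h_{ij} (i ≥ 1, j ≥ 0) with derivation d(h_{ij}) = Σ_{0<k<i} h_{kj}h_{i−k,j+k}, and let G1 be the polynomial F2-algebra on generators g_{n0} (n ≥ 3) and g_{ij} (i ≥ 1, j ≥ 3) with derivation given by d(g_{n0}) = Σ_{j=3}^{n−1} g_{n−j,j}·g_{j0} for n ≥ 3 and d(g_{ij}) = Σ_{0<k<i} g_{kj}·g_{i−k,j+k} for j ≥ 3. Then the F2-algebra map S: E1^cl → G1 determined by S(h_{n0}) = g_{n+2,0} for n ≥ 1 and S(h_{nk}) = g_{n,k+2} for n ≥ 1, k ≥ 1, is an isomorphism of differential graded algebras, i.e., it is an algebra isomorphism satisfying S∘d = d∘S. -/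
open MvPolynomial

noncomputable section

/-- Index type for the classical May `E₁`-page generators `h_{ij}`, `i ≥ 1`. -/
abbrev σcl : Type := {p : ℕ × ℕ // 1 ≤ p.1}

/-- Index type for the generators of `G₁`: `g_{n0}` (`n ≥ 3`) and `g_{ij}` (`j ≥ 3`). -/
abbrev σG : Type := {p : ℕ × ℕ // (3 ≤ p.1 ∧ p.2 = 0) ∨ (1 ≤ p.1 ∧ 3 ≤ p.2)}

/-- The classical May `E₁`-page, a polynomial `F₂`-algebra on the `h_{ij}`. -/
abbrev Ecl : Type := MvPolynomial σcl (ZMod 2)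

/-- The algebra `G₁`, a polynomial `F₂`-algebra on the `g_{n0}`, `g_{ij}`. -/
abbrev G : Type := MvPolynomial σG (ZMod 2)

/-- The generator `h_{ij}` of `E₁^cl` (junk value `0` for `i = 0`). -/
def hv : ℕ × ℕ → Ecl := fun p => if hp : 1 ≤ p.1 then X ⟨p, hp⟩ else 0

/-- The generator `g_{ij}` of `G₁` (junk value `0` for invalid indices). -/
def gv : ℕ × ℕ → G :=
  fun p => if hp : (3 ≤ p.1 ∧ p.2 = 0) ∨ (1 ≤ p.1 ∧ 3 ≤ p.2) then X ⟨p, hp⟩ else 0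

/-- The classical May differential `d(h_{ij}) = Σ_{0<k<i} h_{kj}·h_{i−k,j+k}`. -/
noncomputable def dcl : Derivation (ZMod 2) Ecl Ecl :=
  MvPolynomial.mkDerivation (ZMod 2)
    (fun q : σcl => ∑ k ∈ Finset.Ioo 0 q.1.1, hv (k, q.1.2) * hv (q.1.1 - k, q.1.2 + k))

/-- The differential of `G₁`: `d(g_{n0}) = Σ_{j=3}^{n−1} g_{n−j,j}·g_{j0}` and
`d(g_{ij}) = Σ_{0<k<i} g_{kj}·g_{i−k,j+k}` for `j ≥ 3`. -/
noncomputable def dG : Derivation (ZMod 2) G G :=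
  MvPolynomial.mkDerivation (ZMod 2)
    (fun q : σG =>
      if q.1.2 = 0 then ∑ j ∈ Finset.Icc 3 (q.1.1 - 1), gv (q.1.1 - j, j) * gv (j, 0)
      else ∑ k ∈ Finset.Ioo 0 q.1.1, gv (k, q.1.2) * gv (q.1.1 - k, q.1.2 + k))

/-- The substitution `S` with `S(h_{n0}) = g_{n+2,0}` and `S(h_{nk}) = g_{n,k+2}`
for `k ≥ 1`. -/
noncomputable def S : Ecl →ₐ[ZMod 2] G :=
  MvPolynomial.aeval
    (fun q : σcl => if q.1.2 = 0 then gv (q.1.1 + 2, 0) else gv (q.1.1, q.1.2 + 2))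


/-- The inverse substitution. -/
noncomputable def T : G →ₐ[ZMod 2] Ecl :=
  MvPolynomial.aeval
    (fun q : σG => if q.1.2 = 0 then hv (q.1.1 - 2, 0) else hv (q.1.1, q.1.2 - 2))

lemma hv_eq (n j : ℕ) (h : 1 ≤ n) : hv (n, j) = X ⟨(n, j), h⟩ := dif_pos h

lemma gv_eq (n j : ℕ) (h : (3 ≤ n ∧ j = 0) ∨ (1 ≤ n ∧ 3 ≤ j)) :
    gv (n, j) = X ⟨(n, j), h⟩ := dif_pos h

lemma S_X (n j : ℕ) (h : 1 ≤ n) :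
    S (X (⟨(n, j), h⟩ : σcl)) = if j = 0 then gv (n + 2, 0) else gv (n, j + 2) :=
  aeval_X _ _

lemma T_X (n j : ℕ) (h : (3 ≤ n ∧ j = 0) ∨ (1 ≤ n ∧ 3 ≤ j)) :
    T (X (⟨(n, j), h⟩ : σG)) = if j = 0 then hv (n - 2, 0) else hv (n, j - 2) :=
  aeval_X _ _

lemma dcl_X (n j : ℕ) (h : 1 ≤ n) :
    dcl (X (⟨(n, j), h⟩ : σcl)) =
      ∑ k ∈ Finset.Ioo 0 n, hv (k, j) * hv (n - k, j + k) :=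
  mkDerivation_X (ZMod 2) _ _

lemma dG_X0 (n : ℕ) (h : (3 ≤ n ∧ 0 = 0) ∨ (1 ≤ n ∧ 3 ≤ 0)) :
    dG (X (⟨(n, 0), h⟩ : σG)) =
      ∑ j ∈ Finset.Icc 3 (n - 1), gv (n - j, j) * gv (j, 0) := by
  rw [show dG (X (⟨(n, 0), h⟩ : σG)) = _ from mkDerivation_X (ZMod 2) _ _, if_pos rfl]

lemma dG_Xj (n j : ℕ) (hj : j ≠ 0) (h : (3 ≤ n ∧ j = 0) ∨ (1 ≤ n ∧ 3 ≤ j)) :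
    dG (X (⟨(n, j), h⟩ : σG)) =
      ∑ k ∈ Finset.Ioo 0 n, gv (k, j) * gv (n - k, j + k) := by
  rw [show dG (X (⟨(n, j), h⟩ : σG)) = _ from mkDerivation_X (ZMod 2) _ _, if_neg hj]

lemma TS_aux : ∀ a : Ecl, T (S a) = a := by
  have : (T.comp S) = AlgHom.id (ZMod 2) Ecl := by
    apply MvPolynomial.algHom_ext
    rintro ⟨⟨n, j⟩, hn⟩
    rw [AlgHom.comp_apply, AlgHom.id_apply, S_X n j hn]
    by_cases hj : j = 0
    · subst hj
      rw [if_pos rfl, gv_eq (n + 2) 0 (Or.inl ⟨by omega, rfl⟩),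
        T_X (n + 2) 0 (Or.inl ⟨by omega, rfl⟩), if_pos rfl,
        show n + 2 - 2 = n from by omega, hv_eq n 0 hn]
    · rw [if_neg hj, gv_eq n (j + 2) (Or.inr ⟨hn, by omega⟩),
        T_X n (j + 2) (Or.inr ⟨hn, by omega⟩), if_neg (by omega : ¬ j + 2 = 0),
        show j + 2 - 2 = j from by omega, hv_eq n j hn]
  intro a
  calc T (S a) = (T.comp S) a := rfl
    _ = a := by rw [this]; rfl

lemma ST_aux : ∀ a : G, S (T a) = a := by
  have : (S.comp T) = AlgHom.id (ZMod 2) G := by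
    apply MvPolynomial.algHom_ext
    rintro ⟨⟨n, j⟩, hn⟩
    rw [AlgHom.comp_apply, AlgHom.id_apply, T_X n j hn]
    by_cases hj : j = 0
    · subst hj
      have h3 : 3 ≤ n := by rcases hn with ⟨h, _⟩ | ⟨_, h⟩ <;> omega
      rw [if_pos rfl, hv_eq (n - 2) 0 (by omega), S_X (n - 2) 0 (by omega),
        if_pos rfl, show n - 2 + 2 = n from by omega, gv_eq n 0 hn]
    · have h3 : 3 ≤ j := by rcases hn with ⟨_, h⟩ | ⟨_, h⟩ <;> omega
      have h1 : 1 ≤ n := by rcases hn with ⟨h, _⟩ | ⟨h, _⟩ <;> omega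
      rw [if_neg hj, hv_eq n (j - 2) h1, S_X n (j - 2) h1,
        if_neg (by omega : ¬ j - 2 = 0), show j - 2 + 2 = j from by omega,
        gv_eq n j hn]
  intro a
  calc S (T a) = (S.comp T) a := rfl
    _ = a := by rw [this]; rfl

lemma key (q : σcl) : S (dcl (X q)) = dG (S (X q)) := by
  obtain ⟨⟨n, j⟩, hn⟩ := q
  have hn' : 1 ≤ n := hn
  rw [dcl_X n j hn, map_sum, S_X n j hn]
  by_cases hj : j = 0
  · subst hj
    rw [if_pos rfl, gv_eq (n + 2) 0 (Or.inl ⟨by omega, rfl⟩),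
      dG_X0 (n + 2) (Or.inl ⟨by omega, rfl⟩),
      show n + 2 - 1 = n + 1 from by omega]
    refine Finset.sum_bij' (fun k _ => k + 2) (fun l _ => l - 2) ?_ ?_ ?_ ?_ ?_
    · intro k hk
      simp only [Finset.mem_Ioo] at hk
      simp only [Finset.mem_Icc]; omega
    · intro l hl
      simp only [Finset.mem_Icc] at hl
      simp only [Finset.mem_Ioo]; omega
    · intro k _; show k + 2 - 2 = k; omega
    · intro l hl; simp only [Finset.mem_Icc] at hl; show l - 2 + 2 = l; omega
    · intro k hk
      simp only [Finset.mem_Ioo] at hk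
      show S (hv (k, 0) * hv (n - k, 0 + k)) =
        gv (n + 2 - (k + 2), k + 2) * gv (k + 2, 0)
      rw [zero_add, map_mul, hv_eq k 0 (by omega), hv_eq (n - k) k (by omega),
        S_X k 0 (by omega), S_X (n - k) k (by omega), if_pos rfl,
        if_neg (by omega : ¬ k = 0),
        show n + 2 - (k + 2) = n - k from by omega]
      ring
  · rw [if_neg hj, gv_eq n (j + 2) (Or.inr ⟨hn, by omega⟩),
      dG_Xj n (j + 2) (by omega) (Or.inr ⟨hn, by omega⟩)]
    refine Finset.sum_congr rfl fun k hk => ?_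
    simp only [Finset.mem_Ioo] at hk
    rw [map_mul, hv_eq k j (by omega), hv_eq (n - k) (j + k) (by omega),
      S_X k j (by omega), S_X (n - k) (j + k) (by omega), if_neg hj,
      if_neg (by omega : ¬ j + k = 0),
      show j + k + 2 = j + 2 + k from by omega]

lemma comm_aux (a : Ecl) : S (dcl a) = dG (S a) := by
  induction a using MvPolynomial.induction_on with
  | C c =>
    rw [show (C c : Ecl) = algebraMap (ZMod 2) Ecl c from rfl,
      Derivation.map_algebraMap, map_zero, AlgHom.commutes,
      Derivation.map_algebraMap]
  | add p q hp hq => rw [map_add, map_add, map_add, hp, hq, map_add]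
  | mul_X p q hp =>
    rw [Derivation.leibniz, map_add, smul_eq_mul, smul_eq_mul, map_mul,
      map_mul, hp, key, map_mul, Derivation.leibniz, smul_eq_mul, smul_eq_mul]

/-- `S` is an isomorphism of differential graded algebras:
it is bijective and `S ∘ d = d ∘ S`. -/
theorem stmt11 : Function.Bijective S ∧ ∀ a : Ecl, S (dcl a) = dG (S a) := by
  exact ⟨⟨Function.LeftInverse.injective TS_aux,
    Function.RightInverse.surjective ST_aux⟩, comm_aux⟩

end
end

section
/- Suppose a trigraded F2-algebra spectral sequence has E3-page equal to F2[h^{±1}][p, v2]/(v2²) with degrees deg(h) = (0,1,0), deg(p) = (4,4,4), deg(v2) = (3,1,1) in (t, f, c), and differentials d_r of degree (−1, r, r−1) for r ≥ 3. Then all differentials d_r for r ≥ 3 vanish: for every homogeneous element x of the E3-page, there is no nonzero homogeneous element of the E3-page in degree deg(x) + (−1, r, r−1) for any r ≥ 3. -/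
/-- The degree of the monomial `h^a·p^b·v₂^e` of `F2[h^{±1}][p,v₂]/(v₂²)`,
with `deg h = (0,1,0)`, `deg p = (4,4,4)`, `deg v₂ = (3,1,1)` in `(t,f,c)`. -/
def deg (a : ℤ) (b e : ℕ) : ℤ × ℤ × ℤ :=
  a • ((0 : ℤ), (1 : ℤ), (0 : ℤ)) + (b : ℤ) • ((4 : ℤ), (4 : ℤ), (4 : ℤ)) +
    (e : ℤ) • ((3 : ℤ), (1 : ℤ), (1 : ℤ))

/-- on the `E₃`-page `F2[h^{±1}][p, v₂]/(v₂²)`, all differentials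
`d_r` (`r ≥ 3`), of degree `(−1, r, r−1)`, vanish for degree reasons: no degree
of a monomial shifted by `(−1, r, r−1)` is again the degree of a monomial. -/
theorem stmt17 (r : ℤ) (hr : 3 ≤ r) (a a' : ℤ) (b b' : ℕ) (e e' : ℕ)
    (he : e ≤ 1) (he' : e' ≤ 1) :
    deg a b e + ((-1 : ℤ), r, r - 1) ≠ deg a' b' e' := by
  intro h
  simp only [deg, Prod.ext_iff, Prod.fst_add, Prod.snd_add, Prod.smul_mk, smul_eq_mul, Prod.mk_add_mk, Prod.mk.injEq] at h
  omega
end
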